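/- arXiv:math/0111210 — 2 statements merged into one kernel-verified Lean document; each statement's English description precedes it below -/
import Mathlib

section
/- With notation as in the previous grading setup (finite-dimensional graded sl₂-module V = ⊕_{i=0}^{2m} V_i, h acting by scalar i-m on V_i, e raising degree by 2, f lowering by 2, V₀ ≠ 0), if m ≥ 1 then the map v ↦ e^{m-1}·v is a linear isomorphism from V₁ onto V_{2m-1}. -/
/-!
The Casimir element `C = h² + 2h + 4fe` commutes with `e`, `f` and `h`, so it preserves
`U = V_{-k} ∩ ker eᵏ`, where `V_μ` is the `μ`-eigenspace of `h`. If `U ≠ 0`, pick a `C`-eigenvector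
`z ∈ U` with eigenvalue `c`. Going up the `e`-string of `z` to its last nonzero vector, of weight
`μ = 2t - k` with `t < k`, gives `c = μ² + 2μ`. Going down the `f`-string, which terminates because
`h` has finitely many eigenvalues, to its last nonzero vector, of weight `ν = -k - 2q`, gives
`c = ν² - 2ν`. These are incompatible, so `eᵏ` is injective on `V_{-k}` and symmetrically `fᵏ` is
injective on `V_k`. As `h` acts on `Vsub 1` by `1 - m` and on `Vsub (2m - 1)` by `m - 1`, the maps
`e^{m-1} : Vsub 1 → Vsub (2m - 1)` and `f^{m-1} : Vsub (2m - 1) → Vsub 1` are both injective, so the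
two pieces have the same dimension.
-/

open Module End

lemma pow_apply_mem_of_shift {R M ι : Type*} [Semiring R] [AddCommMonoid M] [Module R M]
    [AddMonoid ι] {Vsub : ι → Submodule R M} {x : End R M} {d : ι}
    (hx : ∀ i, ∀ v ∈ Vsub i, x v ∈ Vsub (i + d)) (j : ℕ) {i : ι} {v : M} (hv : v ∈ Vsub i) :
    (x ^ j) v ∈ Vsub (i + j • d) := by
  induction j with
  | zero => simpa using hv
  | succ j ih => simpa [pow_succ', succ_nsmul, ← add_assoc] using hx _ _ ih

section Sl2

variable {K V : Type*} [Field K] [AddCommGroup V] [Module K V] {a c μ : K} {v : V}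

lemma apply_mem_eigenspace_of_commutator {h x : End K V} (hx : h * x - x * h = a • x)
    (hv : v ∈ eigenspace h μ) : x v ∈ eigenspace h (μ + a) := by
  rw [mem_eigenspace_iff] at hv ⊢
  have := LinearMap.congr_fun hx v
  simp only [LinearMap.sub_apply, mul_apply, LinearMap.smul_apply, hv, map_smul] at this
  linear_combination (norm := module) this

lemma pow_apply_mem_eigenspace_of_commutator {h x : End K V} (hx : h * x - x * h = a • x)
    (hv : v ∈ eigenspace h μ) (j : ℕ) : (x ^ j) v ∈ eigenspace h (μ + j * a) := by
  induction j with
  | zero => simpa using hv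
  | succ j ih =>
    rw [pow_succ', mul_apply, Nat.cast_succ, add_one_mul, ← add_assoc]
    exact apply_mem_eigenspace_of_commutator hx ih

lemma exists_pow_apply_eq_zero_of_commutator [FiniteDimensional K V] [CharZero K]
    {h x : End K V} (hx : h * x - x * h = a • x) (ha : a ≠ 0) (hv : v ∈ eigenspace h μ) :
    ∃ n : ℕ, (x ^ n) v = 0 := by
  by_contra! hne
  have hinj : Function.Injective fun n : ℕ ↦ μ + n * a := fun n n' hnn' ↦ by
    simpa [ha] using hnn'
  refine Set.infinite_range_of_injective hinj ((finite_hasEigenvalue h).subset ?_)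
  rintro _ ⟨n, rfl⟩
  exact hasEigenvalue_of_hasEigenvector
    (hasEigenvector_iff.mpr ⟨pow_apply_mem_eigenspace_of_commutator hx hv n, hne n⟩)

lemma exists_pow_apply_ne_zero_and_apply_eq_zero {x : End K V} {n : ℕ} (hv : v ≠ 0)
    (hn : (x ^ n) v = 0) : ∃ j < n, (x ^ j) v ≠ 0 ∧ x ((x ^ j) v) = 0 := by
  obtain ⟨j, hj, hj1⟩ := Nat.exists_not_and_succ_of_not_zero_of_exists
    (p := fun j ↦ (x ^ j) v = 0) (by simpa using hv) ⟨n, hn⟩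
  refine ⟨j, not_le.mp fun hnj ↦ hj (pow_map_zero_of_le hnj hn), hj, ?_⟩
  rwa [← mul_apply, ← pow_succ']

lemma exists_hasEigenvector_mem_of_mapsTo [IsAlgClosed K] [FiniteDimensional K V] (C : End K V)
    {U : Submodule K V} (hU : U ≠ ⊥) (hCU : ∀ v ∈ U, C v ∈ U) :
    ∃ c z, z ∈ U ∧ C.HasEigenvector c z := by
  have : Nontrivial U := Submodule.nontrivial_iff_ne_bot.mpr hU
  obtain ⟨c, hc⟩ := exists_eigenvalue (C.restrict hCU)
  obtain ⟨z, hz⟩ := hc.exists_hasEigenvector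
  refine ⟨c, z, z.2, hasEigenvector_iff.mpr ⟨mem_eigenspace_iff.mpr ?_, ?_⟩⟩
  · exact congrArg Subtype.val hz.apply_eq_smul
  · simpa using hz.right

def casimir (e f h : End K V) : End K V := h * h + 2 * h + 4 * (f * e)

variable {e f h : End K V}

lemma commute_casimir_e (hhe : h * e - e * h = (2 : K) • e) (hef : e * f - f * e = h) :
    Commute (casimir e f h) e := by
  rw [two_smul] at hhe
  unfold Commute SemiconjBy casimir
  linear_combination (norm := noncomm_ring) h * hhe + hhe * h - 4 * hef * e

lemma commute_casimir_f (hhf : h * f - f * h = (-2 : K) • f) (hef : e * f - f * e = h) :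
    Commute (casimir e f h) f := by
  rw [neg_smul, two_smul] at hhf
  unfold Commute SemiconjBy casimir
  linear_combination (norm := noncomm_ring) h * hhf + hhf * h + 4 * f * hef

lemma commute_casimir_h (hhe : h * e - e * h = (2 : K) • e)
    (hhf : h * f - f * h = (-2 : K) • f) : Commute (casimir e f h) h := by
  rw [two_smul] at hhe
  rw [neg_smul, two_smul] at hhf
  unfold Commute SemiconjBy casimir
  linear_combination (norm := noncomm_ring) -4 * f * hhe - 4 * hhf * e

lemma casimir_apply_of_apply_e_eq_zero (hv : v ∈ eigenspace h μ) (hev : e v = 0) :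
    casimir e f h v = (μ * μ + 2 * μ) • v := by
  rw [mem_eigenspace_iff] at hv
  simp only [casimir, LinearMap.add_apply, mul_apply, hv, map_smul, ofNat_apply, hev, map_zero,
    add_zero]
  module

lemma casimir_apply_of_apply_f_eq_zero (hef : e * f - f * e = h) (hv : v ∈ eigenspace h μ)
    (hfv : f v = 0) : casimir e f h v = (μ * μ - 2 * μ) • v := by
  rw [mem_eigenspace_iff] at hv
  have hfe := LinearMap.congr_fun hef v
  simp only [LinearMap.sub_apply, mul_apply, hfv, map_zero, zero_sub, hv] at hfe
  simp only [casimir, LinearMap.add_apply, mul_apply, hv, map_smul, ofNat_apply,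
    neg_eq_iff_eq_neg.mp hfe, smul_neg]
  module

lemma exists_highest_weight_casimir_eq (hhe : h * e - e * h = (2 : K) • e)
    (hef : e * f - f * e = h) {k : ℕ} (hC : casimir e f h v = c • v) (hv : v ∈ eigenspace h μ)
    (hv0 : v ≠ 0) (hk : (e ^ k) v = 0) :
    ∃ t < k, c = (μ + t * 2) * (μ + t * 2) + 2 * (μ + t * 2) := by
  obtain ⟨t, htk, hw0, hew⟩ := exists_pow_apply_ne_zero_and_apply_eq_zero hv0 hk
  refine ⟨t, htk, smul_left_injective K hw0 ?_⟩
  beta_reduce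
  rw [← casimir_apply_of_apply_e_eq_zero (pow_apply_mem_eigenspace_of_commutator hhe hv t) hew,
    ← mul_apply, ((commute_casimir_e hhe hef).pow_right t).eq, mul_apply, hC, map_smul]

lemma exists_lowest_weight_casimir_eq [FiniteDimensional K V] [CharZero K]
    (hhf : h * f - f * h = (-2 : K) • f) (hef : e * f - f * e = h)
    (hC : casimir e f h v = c • v) (hv : v ∈ eigenspace h μ) (hv0 : v ≠ 0) :
    ∃ q : ℕ, c = (μ + q * -2) * (μ + q * -2) - 2 * (μ + q * -2) := by
  obtain ⟨n, hn⟩ := exists_pow_apply_eq_zero_of_commutator hhf (by norm_num) hv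
  obtain ⟨q, -, hw0, hfw⟩ := exists_pow_apply_ne_zero_and_apply_eq_zero hv0 hn
  refine ⟨q, smul_left_injective K hw0 ?_⟩
  beta_reduce
  rw [← casimir_apply_of_apply_f_eq_zero hef (pow_apply_mem_eigenspace_of_commutator hhf hv q) hfw,
    ← mul_apply, ((commute_casimir_f hhf hef).pow_right q).eq, mul_apply, hC, map_smul]

theorem disjoint_eigenspace_ker_pow_e [FiniteDimensional K V] [IsAlgClosed K] [CharZero K]
    (hhe : h * e - e * h = (2 : K) • e) (hhf : h * f - f * h = (-2 : K) • f)
    (hef : e * f - f * e = h) (k : ℕ) :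
    Disjoint (eigenspace h (-k)) (LinearMap.ker (e ^ k)) := by
  rw [disjoint_iff]
  by_contra hU
  have hCU : ∀ v ∈ eigenspace h (-k) ⊓ LinearMap.ker (e ^ k),
      casimir e f h v ∈ eigenspace h (-k) ⊓ LinearMap.ker (e ^ k) := fun v hv ↦
    Submodule.mem_inf.mpr
      ⟨mapsTo_genEigenspace_of_comm (commute_casimir_h hhe hhf).symm _ _ hv.1, by
        rw [LinearMap.mem_ker, ← mul_apply, ← ((commute_casimir_e hhe hef).pow_right k).eq,
          mul_apply, LinearMap.mem_ker.mp hv.2, map_zero]⟩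
  obtain ⟨c, z, ⟨hz, hzk⟩, hCz⟩ := exists_hasEigenvector_mem_of_mapsTo _ hU hCU
  obtain ⟨t, htk, hct⟩ :=
    exists_highest_weight_casimir_eq hhe hef hCz.apply_eq_smul hz hCz.2 hzk
  obtain ⟨q, hcq⟩ := exists_lowest_weight_casimir_eq hhf hef hCz.apply_eq_smul hz hCz.2
  -- `μ² + 2μ = ν² - 2ν` factors as `(μ + ν)(μ - ν + 2) = 0`, with `μ = 2t - k`, `ν = -k - 2q`.
  have hK : ((t : K) - k - q) * (t + q + 1) = 0 := by linear_combination (hcq - hct) / 4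
  have hZ : ((t : ℤ) - k - q) * (t + q + 1) = 0 := by exact_mod_cast hK
  rcases mul_eq_zero.mp hZ with h | h <;> omega

theorem disjoint_eigenspace_ker_pow_f [FiniteDimensional K V] [IsAlgClosed K] [CharZero K]
    (hhe : h * e - e * h = (2 : K) • e) (hhf : h * f - f * h = (-2 : K) • f)
    (hef : e * f - f * e = h) (k : ℕ) :
    Disjoint (eigenspace h k) (LinearMap.ker (f ^ k)) := by
  have hhf' : -h * f - f * -h = (2 : K) • f := by
    rw [neg_mul, mul_neg, sub_neg_eq_add, neg_add_eq_sub, ← neg_sub, hhf, neg_smul, neg_neg]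
  have hhe' : -h * e - e * -h = (-2 : K) • e := by
    rw [neg_mul, mul_neg, sub_neg_eq_add, neg_add_eq_sub, ← neg_sub, hhe, neg_smul]
  have hfe : f * e - e * f = -h := by rw [← neg_sub, hef]
  have heig : eigenspace (-h) (-k : K) = eigenspace h k := by
    ext v
    simp [neg_smul]
  exact heig ▸ disjoint_eigenspace_ker_pow_e hhf' hhe' hfe k

end Sl2

theorem stmt6_general {V : Type*} [AddCommGroup V] [Module ℂ V] [FiniteDimensional ℂ V]
    (e f h : Module.End ℂ V) (m : ℕ) (hm : 1 ≤ m)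
    (Vsub : ℤ → Submodule ℂ V)
    (hhe : h * e - e * h = (2 : ℂ) • e)
    (hhf : h * f - f * h = (-2 : ℂ) • f)
    (hef : e * f - f * e = h)
    (he : ∀ (i : ℤ), ∀ x ∈ Vsub i, e x ∈ Vsub (i + 2))
    (hf : ∀ (i : ℤ), ∀ x ∈ Vsub i, f x ∈ Vsub (i - 2))
    (hh : ∀ (i : ℤ), ∀ x ∈ Vsub i, h x = ((i : ℂ) - (m : ℂ)) • x) :
    ∃ φ : Vsub 1 ≃ₗ[ℂ] Vsub (2 * (m : ℤ) - 1),
      ∀ x : Vsub 1, (φ x : V) = (e ^ (m - 1)) (x : V) := by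
  have hk : ((m - 1 : ℕ) : ℂ) = m - 1 := by rw [Nat.cast_sub hm, Nat.cast_one]
  have hE : ∀ x ∈ Vsub 1, (e ^ (m - 1)) x ∈ Vsub (2 * m - 1) := fun x hx ↦ by
    convert pow_apply_mem_of_shift he (m - 1) hx using 2
    rw [nsmul_eq_mul]
    omega
  have hF : ∀ x ∈ Vsub (2 * m - 1), (f ^ (m - 1)) x ∈ Vsub 1 := fun x hx ↦ by
    convert pow_apply_mem_of_shift (d := -2) (by simpa only [← sub_eq_add_neg]) (m - 1) hx using 2
    rw [nsmul_eq_mul]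
    omega
  have hE_inj : Function.Injective ((e ^ (m - 1)).restrict hE) := by
    refine (LinearMap.injective_restrict_iff hE).mpr <|
      (disjoint_eigenspace_ker_pow_e hhe hhf hef (m - 1)).mono_left fun x hx ↦ ?_
    rw [mem_eigenspace_iff, hh 1 x hx, hk]
    push_cast
    module
  have hF_inj : Function.Injective ((f ^ (m - 1)).restrict hF) := by
    refine (LinearMap.injective_restrict_iff hF).mpr <|
      (disjoint_eigenspace_ker_pow_f hhe hhf hef (m - 1)).mono_left fun x hx ↦ ?_
    rw [mem_eigenspace_iff, hh _ x hx, hk]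
    push_cast
    module
  exact ⟨LinearMap.linearEquivOfInjective _ hE_inj <| le_antisymm
    (LinearMap.finrank_le_finrank_of_injective hE_inj)
    (LinearMap.finrank_le_finrank_of_injective hF_inj), fun _ ↦ rfl⟩

/-- Remarque 5.7(1), abstract form: in the graded sl₂-module `V = ⊕_{i=0}^{2m} V_i`,
if `m ≥ 1` then `v ↦ e^{m-1} v` is an isomorphism `V₁ ≃ V_{2m-1}`. -/
theorem stmt6 {V : Type*} [AddCommGroup V] [Module ℂ V] [FiniteDimensional ℂ V]
    (e f h : Module.End ℂ V) (m : ℕ) (hm : 1 ≤ m)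
    (Vsub : ℤ → Submodule ℂ V)
    (hinternal : DirectSum.IsInternal Vsub)
    (hsupp : ∀ i : ℤ, i < 0 ∨ 2 * (m : ℤ) < i → Vsub i = ⊥)
    (h0 : Vsub 0 ≠ ⊥)
    (hhe : h * e - e * h = (2 : ℂ) • e)
    (hhf : h * f - f * h = (-2 : ℂ) • f)
    (hef : e * f - f * e = h)
    (he : ∀ (i : ℤ), ∀ x ∈ Vsub i, e x ∈ Vsub (i + 2))
    (hf : ∀ (i : ℤ), ∀ x ∈ Vsub i, f x ∈ Vsub (i - 2))
    (hh : ∀ (i : ℤ), ∀ x ∈ Vsub i, h x = ((i : ℂ) - (m : ℂ)) • x) :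
    ∃ φ : Vsub 1 ≃ₗ[ℂ] Vsub (2 * (m : ℤ) - 1),
      ∀ x : Vsub 1, (φ x : V) = (e ^ (m - 1)) (x : V) :=
  stmt6_general e f h m hm Vsub hhe hhf hef he hf hh
end

section
/- Define P_{n,r} over the field ℚ(k₁,ℏ) by the B₂-recurrence P_{n+1,r} = -2r(2k₁+2r-1)P_{n,r-1} - (n+1-2r)(ℏ+n+2r)P_{n,r} (P_{0,0}=1, P_{n,-1}=0). Then P_{n,r} is divisible by ∏_{i=1}^{r}(2k₁+2i-1) in ℚ[k₁,ℏ], and P_{n,0} = (-1)^n n! ∏_{j=0}^{n-1}(ℏ+j). -/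
open MvPolynomial Finset

/-!
The coefficient of `P n (r - 1)` in the recurrence carries the factor `2k₁ + 2r - 1`, the last
factor of `∏_{i=1}^{r} (2k₁ + 2i - 1)`, while the coefficient of `P n r` carries none; so
divisibility by the product propagates from row `n` to row `n + 1`. At `r = 0` the first term
vanishes (`P n (-1) = 0`), and `P n 0` is a plain product of the coefficients
`-(n + 1)(ℏ + n)`.
-/

theorem prod_range_dvd_of_recurrence {R : Type*} [CommRing R] (u : ℕ → ℕ → R) (d : ℕ → R)
    (h0 : ∀ r, (∏ i ∈ range r, d i) ∣ u 0 r)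
    (hsucc : ∀ n s, ∃ a b, u (n + 1) (s + 1) = a * d s * u n s + b * u n (s + 1)) :
    ∀ n r, (∏ i ∈ range r, d i) ∣ u n r := by
  intro n
  induction n with
  | zero => exact h0
  | succ n ih =>
    rintro (_ | s)
    · simp
    · obtain ⟨a, b, hu⟩ := hsucc n s
      refine hu ▸ dvd_add ?_ (dvd_mul_of_dvd_right (ih (s + 1)) b)
      obtain ⟨q, hq⟩ := ih s
      exact ⟨a * q, by rw [hq, prod_range_succ]; ring⟩

/-- `k₁ = X 0`, `ℏ = X 1`. -/
def IsB2Recurrence (P : ℕ → ℤ → MvPolynomial (Fin 2) ℚ) : Prop :=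
  ∀ (n : ℕ) (r : ℤ), P (n + 1) r =
    -(C (2 * (r : ℚ)) * (2 * X 0 + C (2 * (r : ℚ) - 1))) * P n (r - 1)
      - C ((n : ℚ) + 1 - 2 * r) * (X 1 + C ((n : ℚ) + 2 * r)) * P n r

namespace IsB2Recurrence

variable {P : ℕ → ℤ → MvPolynomial (Fin 2) ℚ}

theorem succ_natCast_succ (hrec : IsB2Recurrence P) (n s : ℕ) :
    P (n + 1) ((s + 1 : ℕ) : ℤ) =
      -C (2 * ((s : ℚ) + 1)) * (2 * X 0 + C (2 * (s : ℚ) + 1)) * P n s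
        - C ((n : ℚ) - 2 * s - 1) * (X 1 + C ((n : ℚ) + 2 * s + 2)) * P n ((s + 1 : ℕ) : ℤ) := by
  rw [hrec]
  push_cast
  rw [add_sub_cancel_right]
  ring

theorem succ_zero (hrec : IsB2Recurrence P) (hPm1 : ∀ n : ℕ, P n (-1) = 0) (n : ℕ) :
    P (n + 1) 0 = P n 0 * (C (-((n : ℚ) + 1)) * (X 1 + C (n : ℚ))) := by
  rw [hrec, zero_sub, hPm1]
  push_cast
  simp only [mul_zero, sub_zero, add_zero, C_neg]
  ring

theorem prod_dvd (hrec : IsB2Recurrence P) (hP0r : ∀ r : ℤ, r ≠ 0 → P 0 r = 0) (n r : ℕ) :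
    (∏ i ∈ range r, (2 * X 0 + C (2 * (i : ℚ) + 1))) ∣ P n (r : ℤ) := by
  refine prod_range_dvd_of_recurrence (fun n r ↦ P n r) _ ?_ (fun n s ↦ ?_) n r
  · rintro (_ | r)
    · simp
    · rw [hP0r _ (by omega)]
      exact dvd_zero _
  · exact ⟨-C (2 * ((s : ℚ) + 1)), -(C ((n : ℚ) - 2 * s - 1) * (X 1 + C ((n : ℚ) + 2 * s + 2))),
      (hrec.succ_natCast_succ n s).trans (by ring)⟩

theorem zero_eq (hrec : IsB2Recurrence P) (hP00 : P 0 0 = 1) (hPm1 : ∀ n : ℕ, P n (-1) = 0)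
    (n : ℕ) :
    P n 0 = C ((-1 : ℚ) ^ n * (Nat.factorial n : ℚ)) * ∏ j ∈ range n, (X 1 + C (j : ℚ)) := by
  have hprod : ∏ j ∈ range n, (C (-((j : ℚ) + 1)) * (X 1 + C (j : ℚ))) = P n 0 :=
    prod_range_induction _ (fun n ↦ P n 0) hP00 n fun k _ ↦ hrec.succ_zero hPm1 k
  rw [← hprod, prod_mul_distrib, ← map_prod]
  congr 2
  simp_rw [neg_eq_neg_one_mul (_ + 1 : ℚ)]
  rw [prod_mul_distrib, prod_const, card_range, Nat.factorial_eq_prod_range_add_one,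
    Nat.cast_prod]
  simp only [Nat.cast_add_one]

end IsB2Recurrence

/-- Type B₂, partial Assertion 6.6: `∏_{i=1}^r (2k₁+2i-1)` divides `P_{n,r}` and
`P_{n,0} = (-1)^n n! ∏_{j=0}^{n-1}(ℏ+j)`, where `k₁ = X 0` and `ℏ = X 1`. -/
theorem stmt18 (P : ℕ → ℤ → MvPolynomial (Fin 2) ℚ)
    (hP00 : P 0 0 = 1)
    (hP0r : ∀ r : ℤ, r ≠ 0 → P 0 r = 0)
    (hPm1 : ∀ n : ℕ, P n (-1) = 0)
    (hrec : ∀ (n : ℕ) (r : ℤ), P (n + 1) r =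
      -(C (2 * (r : ℚ)) * (2 * X 0 + C (2 * (r : ℚ) - 1))) * P n (r - 1)
        - C ((n : ℚ) + 1 - 2 * r) * (X 1 + C ((n : ℚ) + 2 * r)) * P n r) :
    (∀ n r : ℕ, (∏ i ∈ range r, (2 * X 0 + C (2 * (i : ℚ) + 1))) ∣ P n (r : ℤ)) ∧
    (∀ n : ℕ, P n 0 = C ((-1 : ℚ) ^ n * (Nat.factorial n : ℚ)) *
      ∏ j ∈ range n, (X 1 + C (j : ℚ))) :=
  have hB2 : IsB2Recurrence P := hrec
  ⟨hB2.prod_dvd hP0r, hB2.zero_eq hP00 hPm1⟩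
end
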